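/- arXiv:1512.07785 — 3 statements merged into one kernel-verified Lean document; each statement's English description precedes it below -/
import Mathlib

section
/- Let A be a discrete valuation ring with fraction field K and residue field κ, Q a finite quiver, d a dimension vector, and θ : Q_0 → ℚ a weight with ∑_q θ_q·d_q = 0. Let ν = (ν_α) and ν' = (ν'_α) be families of matrices ν_α, ν'_α ∈ Mat_{d_{t(α)} × d_{s(α)}}(A) such that the two representations of (Q,d) over κ obtained by reducing all entries modulo the maximal ideal are both θ-stable. Suppose g = (g_q) is a family with g_q ∈ GL_{d_q}(K) satisfying g_{t(α)}·ν_α = ν'_α·g_{s(α)} in Mat(K) for every arrow α. Then there exists c ∈ K^× such that for every vertex q the matrix c·g_q has all its entries in A and det(c·g_q) is a unit of A. -/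
noncomputable section

open Finset

variable {k : Type*} [Field k]

/-- A family of subspaces `W q ⊆ k^{d q}` is a subrepresentation of the representation
given by the linear maps `φ a : k^{d (src a)} → k^{d (tgt a)}`. -/
def IsSubrep {V Ar : Type*} (src tgt : Ar → V) (d : V → ℕ)
    (φ : ∀ a : Ar, ((Fin (d (src a)) → k) →ₗ[k] (Fin (d (tgt a)) → k)))
    (W : ∀ q : V, Submodule k (Fin (d q) → k)) : Prop :=
  ∀ a : Ar, ∀ x ∈ W (src a), φ a x ∈ W (tgt a)

/-- `θ(W) = ∑_q θ_q · dim W_q`. -/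
def repWeight {V : Type*} [Fintype V] (d : V → ℕ) (θ : V → ℚ)
    (W : ∀ q : V, Submodule k (Fin (d q) → k)) : ℚ :=
  ∑ q, θ q * (Module.finrank k (W q) : ℚ)

/-- A representation is `θ`-semistable if `θ(W) ≤ 0` for every subrepresentation `W`. -/
def RepSemistable {V Ar : Type*} [Fintype V] (src tgt : Ar → V) (d : V → ℕ) (θ : V → ℚ)
    (φ : ∀ a : Ar, ((Fin (d (src a)) → k) →ₗ[k] (Fin (d (tgt a)) → k))) : Prop :=
  ∀ W : ∀ q : V, Submodule k (Fin (d q) → k),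
    IsSubrep src tgt d φ W → repWeight d θ W ≤ 0

/-- A representation is `θ`-stable if it is `θ`-semistable and `θ(W) < 0` for every
subrepresentation other than `0` and the whole representation. -/
def RepStable {V Ar : Type*} [Fintype V] (src tgt : Ar → V) (d : V → ℕ) (θ : V → ℚ)
    (φ : ∀ a : Ar, ((Fin (d (src a)) → k) →ₗ[k] (Fin (d (tgt a)) → k))) : Prop :=
  RepSemistable src tgt d θ φ ∧
  ∀ W : ∀ q : V, Submodule k (Fin (d q) → k),
    IsSubrep src tgt d φ W →
    W ≠ (fun _ => ⊥) → W ≠ (fun _ => ⊤) →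
    repWeight d θ W < 0

/-!
Dividing all the `g q` by an entry of largest valuation yields integral matrices `M q` with an
entry equal to `1`, so their reductions modulo the maximal ideal form a nonzero morphism between
the two reduced representations. Its kernel and image are subrepresentations whose weights are
`≤ 0` and add up to `θ(d) = 0`; stability then forces the kernel to vanish. Hence every reduced
`M q` is invertible, that is, `det (M q)` is a unit of `A`.
-/

section Schur

variable {V Ar : Type*} {src tgt : Ar → V} {d : V → ℕ}
  {φ φ' : ∀ a : Ar, ((Fin (d (src a)) → k) →ₗ[k] (Fin (d (tgt a)) → k))}
  {h : ∀ q : V, (Fin (d q) → k) →ₗ[k] (Fin (d q) → k)}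

theorem isSubrep_ker (hint : ∀ a, h (tgt a) ∘ₗ φ a = φ' a ∘ₗ h (src a)) :
    IsSubrep src tgt d φ (fun q => LinearMap.ker (h q)) := by
  intro a x hx
  rw [LinearMap.mem_ker] at hx ⊢
  rw [← LinearMap.comp_apply, hint a, LinearMap.comp_apply, hx, map_zero]

theorem isSubrep_range (hint : ∀ a, h (tgt a) ∘ₗ φ a = φ' a ∘ₗ h (src a)) :
    IsSubrep src tgt d φ' (fun q => LinearMap.range (h q)) := by
  rintro a _ ⟨x, rfl⟩
  exact ⟨φ a x, by rw [← LinearMap.comp_apply, hint a, LinearMap.comp_apply]⟩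

theorem repWeight_ker_add_repWeight_range [Fintype V] (θ : V → ℚ) :
    repWeight d θ (fun q => LinearMap.ker (h q)) +
      repWeight d θ (fun q => LinearMap.range (h q)) = ∑ q, θ q * (d q : ℚ) := by
  rw [repWeight, repWeight, ← Finset.sum_add_distrib]
  refine Finset.sum_congr rfl fun q _ => ?_
  have hrank : Module.finrank k (LinearMap.ker (h q)) + Module.finrank k (LinearMap.range (h q))
      = d q := by
    have := LinearMap.finrank_range_add_finrank_ker (h q)
    rw [Module.finrank_fin_fun] at this
    omega
  rw [← mul_add]
  congr 1
  exact_mod_cast hrank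

theorem ker_eq_bot_of_repStable [Fintype V] {θ : V → ℚ} (hθ : ∑ q, θ q * (d q : ℚ) = 0)
    (hst : RepStable src tgt d θ φ) (hst' : RepSemistable src tgt d θ φ')
    (hint : ∀ a, h (tgt a) ∘ₗ φ a = φ' a ∘ₗ h (src a)) (hne : ∃ q, h q ≠ 0) (q : V) :
    LinearMap.ker (h q) = ⊥ := by
  have hker := hst.1 _ (isSubrep_ker hint)
  have hrange := hst' _ (isSubrep_range hint)
  have hsum := repWeight_ker_add_repWeight_range (h := h) θ
  have hker_ne_top : (fun q => LinearMap.ker (h q)) ≠ fun _ => ⊤ := by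
    obtain ⟨q₀, hq₀⟩ := hne
    exact fun htop => hq₀ (LinearMap.ker_eq_top.mp (congrFun htop q₀))
  by_contra hq
  have hlt := hst.2 _ (isSubrep_ker hint) (fun hbot => hq (congrFun hbot q)) hker_ne_top
  linarith

end Schur

section Rescaling

variable {A K : Type*} [CommRing A] [IsDomain A] [ValuationRing A] [Field K] [Algebra A K]
  [IsFractionRing A K]

theorem ValuationRing.exists_isInteger_mul_and_mul_eq_one {ι : Type*} [Finite ι] {f : ι → K}
    (hf : ∃ i, f i ≠ 0) :
    ∃ c : K, (∀ i, IsLocalization.IsInteger A (c * f i)) ∧ ∃ i, c * f i = 1 := by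
  let v := ValuationRing.valuation A K
  obtain ⟨i₀, hi₀⟩ := hf
  have : Nonempty ι := ⟨i₀⟩
  obtain ⟨j, hj⟩ := Finite.exists_max (fun i => v (f i))
  have hfj : f j ≠ 0 := by
    rw [← v.pos_iff] at hi₀ ⊢
    exact hi₀.trans_le (hj i₀)
  refine ⟨(f j)⁻¹, fun i => ?_, j, inv_mul_cancel₀ hfj⟩
  refine (ValuationRing.mem_integer_iff A K _).mp ?_
  rw [Valuation.mem_integer_iff, map_mul, map_inv₀]
  exact inv_mul_le_one_of_le₀ (hj i) zero_le

theorem ValuationRing.exists_map_eq_smul_and_entry_eq_one {V : Type*} [Finite V]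
    {m n : V → Type*} [∀ q, Finite (m q)] [∀ q, Finite (n q)] {g : ∀ q, Matrix (m q) (n q) K}
    (hg : ∃ q, g q ≠ 0) :
    ∃ c : K, c ≠ 0 ∧ ∃ M : ∀ q, Matrix (m q) (n q) A,
      (∀ q, (M q).map (algebraMap A K) = c • g q) ∧ ∃ q i j, M q i j = 1 := by
  obtain ⟨q₀, hq₀⟩ := hg
  obtain ⟨i₀, j₀, hij₀⟩ : ∃ i j, g q₀ i j ≠ 0 := by
    by_contra! h
    exact hq₀ (Matrix.ext h)
  obtain ⟨c, hint, ⟨q, i, j⟩, hone⟩ :=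
    exists_isInteger_mul_and_mul_eq_one (A := A)
      (f := fun p : Σ q, m q × n q => g p.1 p.2.1 p.2.2) ⟨⟨q₀, i₀, j₀⟩, hij₀⟩
  choose F hF using hint
  refine ⟨c, left_ne_zero_of_mul_eq_one hone, fun q => Matrix.of fun i j => F ⟨q, i, j⟩,
    fun q => Matrix.ext fun i j => hF ⟨q, i, j⟩, q, i, j, ?_⟩
  exact IsFractionRing.injective A K <| (hF ⟨q, i, j⟩).trans (hone.trans (map_one _).symm)

end Rescaling

theorem Matrix.isUnit_det_of_ker_mulVecLin_map_residue_eq_bot {A n : Type*} [CommRing A]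
    [IsLocalRing A] [Fintype n] [DecidableEq n] {M : Matrix n n A}
    (hM : LinearMap.ker (M.map (IsLocalRing.residue A)).mulVecLin = ⊥) : IsUnit M.det := by
  rw [← IsLocalRing.residue_ne_zero_iff_isUnit, RingHom.map_det, ← isUnit_iff_ne_zero,
    ← isUnit_iff_isUnit_det, ← mulVec_injective_iff_isUnit]
  exact LinearMap.ker_eq_bot.mp hM

theorem intertwiner_over_dvr_integral_general
    {A : Type*} [CommRing A] [IsDomain A] [IsDiscreteValuationRing A]
    {V Ar : Type*} [Fintype V]
    (src tgt : Ar → V) (d : V → ℕ) (θ : V → ℚ)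
    (hθ : ∑ q, θ q * (d q : ℚ) = 0)
    (ν ν' : ∀ a : Ar, Matrix (Fin (d (tgt a))) (Fin (d (src a))) A)
    (hst : RepStable src tgt d θ
      (fun a => Matrix.mulVecLin ((ν a).map (IsLocalRing.residue A))))
    (hst' : RepStable src tgt d θ
      (fun a => Matrix.mulVecLin ((ν' a).map (IsLocalRing.residue A))))
    (g : ∀ q : V, Matrix (Fin (d q)) (Fin (d q)) (FractionRing A))
    (hg : ∀ q : V, IsUnit (g q).det)
    (hcomm : ∀ a : Ar, g (tgt a) * (ν a).map (algebraMap A (FractionRing A))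
      = (ν' a).map (algebraMap A (FractionRing A)) * g (src a)) :
    ∃ c : FractionRing A, c ≠ 0 ∧ ∀ q : V,
      ∃ M : Matrix (Fin (d q)) (Fin (d q)) A,
        M.map (algebraMap A (FractionRing A)) = c • g q ∧ IsUnit M.det := by
  by_cases hg0 : ∀ q, g q = 0
  · refine ⟨1, one_ne_zero, fun q => ⟨0, by simp [hg0 q], ?_⟩⟩
    have : IsEmpty (Fin (d q)) := by
      rw [← not_nonempty_iff]
      intro
      simpa [hg0 q] using hg q
    simp
  push Not at hg0
  obtain ⟨c, hc, M, hM, q₁, i₁, j₁, hM₁⟩ :=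
    ValuationRing.exists_map_eq_smul_and_entry_eq_one (A := A) hg0
  have hMcomm : ∀ a, M (tgt a) * ν a = ν' a * M (src a) := fun a =>
    Matrix.map_injective (IsFractionRing.injective A (FractionRing A)) <| by
      simp only [Matrix.map_mul, hM, Matrix.smul_mul, hcomm, Matrix.mul_smul]
  have hker := ker_eq_bot_of_repStable hθ hst hst'.1
    (h := fun q => ((M q).map (IsLocalRing.residue A)).mulVecLin)
    (fun a => by simp only [← Matrix.mulVecLin_mul, ← Matrix.map_mul, hMcomm])
    ⟨q₁, fun h0 => by
      simpa [hM₁] using congrFun (LinearMap.congr_fun h0 (Pi.single j₁ 1)) i₁⟩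
  exact ⟨c, hc, fun q =>
    ⟨M q, hM q, Matrix.isUnit_det_of_ker_mulVecLin_map_residue_eq_bot (hker q)⟩⟩

/-- A family of matrices `g_q` over the fraction field of a DVR intertwining two families of
matrices over the DVR whose reductions are `θ`-stable representations can be rescaled by a
common factor so that all entries lie in the DVR and all determinants are units. -/
theorem intertwiner_over_dvr_integral
    {A : Type*} [CommRing A] [IsDomain A] [IsDiscreteValuationRing A]
    {V Ar : Type*} [Fintype V] [Fintype Ar]
    (src tgt : Ar → V) (d : V → ℕ) (θ : V → ℚ)
    (hθ : ∑ q, θ q * (d q : ℚ) = 0)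
    (ν ν' : ∀ a : Ar, Matrix (Fin (d (tgt a))) (Fin (d (src a))) A)
    (hst : RepStable src tgt d θ
      (fun a => Matrix.mulVecLin ((ν a).map (IsLocalRing.residue A))))
    (hst' : RepStable src tgt d θ
      (fun a => Matrix.mulVecLin ((ν' a).map (IsLocalRing.residue A))))
    (g : ∀ q : V, Matrix (Fin (d q)) (Fin (d q)) (FractionRing A))
    (hg : ∀ q : V, IsUnit (g q).det)
    (hcomm : ∀ a : Ar, g (tgt a) * (ν a).map (algebraMap A (FractionRing A))
      = (ν' a).map (algebraMap A (FractionRing A)) * g (src a)) :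
    ∃ c : FractionRing A, c ≠ 0 ∧ ∀ q : V,
      ∃ M : Matrix (Fin (d q)) (Fin (d q)) A,
        M.map (algebraMap A (FractionRing A)) = c • g q ∧ IsUnit M.det :=
  intertwiner_over_dvr_integral_general src tgt d θ hθ ν ν' hst hst' g hg hcomm
end
end

section
/- Let k be an infinite field, n ≥ 1, and θ ∈ ℚ^n with ∑_i θ_i = 2. There exists a θ-stable representation s = (s_1,…,s_n) of Q_n over k if and only if 0 < θ_i < 1 for all i. -/
noncomputable section

open Finset
open scoped Classical

variable {k : Type*} [Field k]

/-- A pair `(U, W)` is a subrepresentation of the representation `s` of the quiver `Q_n`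
(with dimension vector `(2;1,…,1)`) if `s i ∈ W` for all `i ∈ U`. -/
def QnIsSubrep {n : ℕ} (s : Fin n → Fin 2 → k) (U : Finset (Fin n))
    (W : Submodule k (Fin 2 → k)) : Prop :=
  ∀ i ∈ U, s i ∈ W

/-- `s` is `θ`-semistable: `θ(U,W) = -dim W + ∑_{i∈U} θ_i ≤ 0` for every subrepresentation. -/
def QnSemistable {n : ℕ} (θ : Fin n → ℚ) (s : Fin n → Fin 2 → k) : Prop :=
  ∀ (U : Finset (Fin n)) (W : Submodule k (Fin 2 → k)), QnIsSubrep s U W →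
    -(Module.finrank k W : ℚ) + ∑ i ∈ U, θ i ≤ 0

/-- `s` is `θ`-stable: semistable, and `θ(U,W) < 0` for every subrepresentation other than
`(∅, 0)` and `({1,…,n}, k²)`. -/
def QnStable {n : ℕ} (θ : Fin n → ℚ) (s : Fin n → Fin 2 → k) : Prop :=
  QnSemistable θ s ∧
  ∀ (U : Finset (Fin n)) (W : Submodule k (Fin 2 → k)), QnIsSubrep s U W →
    ¬(U = ∅ ∧ W = ⊥) → ¬(U = Finset.univ ∧ W = ⊤) →
    -(Module.finrank k W : ℚ) + ∑ i ∈ U, θ i < 0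

/-!
Testing stability on the subrepresentations `(univ \ {i}, k²)` and `({i}, k s_i)` forces
`0 < θ_i < 1`. Conversely, if the `s_i` are pairwise linearly independent, a line contains at
most one of them, so `θ(U, W) < 0` for every nontrivial subrepresentation: for a line because
`U` has at most one element and `θ_i < 1`, for `W = k²` because `U` misses some `i`, and `θ_i > 0`.
Over an infinite field, `s_i = (1, x_i)` with distinct `x_i` are pairwise independent.
-/

theorem Submodule.eq_top_of_linearIndependent_pair {K V : Type*} [DivisionRing K]
    [AddCommGroup V] [Module K V] (hV : Module.finrank K V = 2) {u v : V}
    (huv : LinearIndependent K ![u, v]) {W : Submodule K V} (hu : u ∈ W) (hv : v ∈ W) :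
    W = ⊤ := by
  refine top_unique ?_
  rw [← huv.span_eq_top_of_card_eq_finrank (by simp [hV]), Submodule.span_le,
    Set.range_subset_iff]
  intro i
  fin_cases i <;> assumption

theorem linearIndependent_one_pair_of_ne {a b : k} (hab : a ≠ b) :
    LinearIndependent k ![(![1, a] : Fin 2 → k), ![1, b]] := by
  rw [LinearIndependent.pair_iff]
  intro s t h
  have h0 := congrFun h 0
  have h1 := congrFun h 1
  simp only [Fin.isValue, Pi.add_apply, Pi.smul_apply, Matrix.cons_val_zero,
    Matrix.cons_val_one, smul_eq_mul, mul_one, Pi.zero_apply] at h0 h1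
  have hs : s * (a - b) = 0 := by linear_combination h1 - b * h0
  have hs : s = 0 := (mul_eq_zero.mp hs).resolve_right (sub_ne_zero.mpr hab)
  exact ⟨hs, by simpa [hs] using h0⟩

section

variable {n : ℕ} {θ : Fin n → ℚ} {s : Fin n → Fin 2 → k}

theorem QnStable.pos (hs : QnStable θ s) (hsum : ∑ i, θ i = 2) (i : Fin n) : 0 < θ i := by
  have h := hs.2 (univ.erase i) ⊤ (fun _ _ => Submodule.mem_top)
    (fun h => bot_ne_top h.2.symm) (fun h => erase_eq_self.mp h.1 (mem_univ i))
  have hsplit := add_sum_erase univ θ (mem_univ i)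
  simp only [finrank_top, Module.finrank_fin_fun] at h
  push_cast at h
  linarith

theorem QnStable.lt_one (hs : QnStable θ s) (i : Fin n) : θ i < 1 := by
  have hrank : Module.finrank k (Submodule.span k {s i}) ≤ 1 := by
    simpa using finrank_span_le_card ({s i} : Set (Fin 2 → k))
  have h := hs.2 {i} (Submodule.span k {s i})
    (by simp [QnIsSubrep, Submodule.mem_span_singleton_self])
    (by simp)
    (fun h => by rw [h.2, finrank_top, Module.finrank_fin_fun] at hrank; omega)
  have hrank' : (Module.finrank k (Submodule.span k {s i}) : ℚ) ≤ 1 := by exact_mod_cast hrank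
  rw [sum_singleton] at h
  linarith

theorem QnStable.of_forall_lt (hsum : ∑ i, θ i = 2)
    (h : ∀ (U : Finset (Fin n)) (W : Submodule k (Fin 2 → k)), QnIsSubrep s U W →
      ¬(U = ∅ ∧ W = ⊥) → ¬(U = Finset.univ ∧ W = ⊤) →
      -(Module.finrank k W : ℚ) + ∑ i ∈ U, θ i < 0) :
    QnStable θ s := by
  refine ⟨fun U W hUW => ?_, h⟩
  by_cases h0 : U = ∅ ∧ W = ⊥
  · obtain ⟨rfl, rfl⟩ := h0
    simp
  by_cases h2 : U = univ ∧ W = ⊤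
  · obtain ⟨rfl, rfl⟩ := h2
    simp [hsum]
  exact (h U W hUW h0 h2).le

theorem QnIsSubrep.card_le_one (hind : Pairwise fun i j => LinearIndependent k ![s i, s j])
    {U : Finset (Fin n)} {W : Submodule k (Fin 2 → k)} (hUW : QnIsSubrep s U W)
    (hW : W ≠ ⊤) : #U ≤ 1 :=
  Finset.card_le_one.mpr fun i hi j hj => by_contra fun hij =>
    hW (Submodule.eq_top_of_linearIndependent_pair (by simp) (hind hij) (hUW i hi) (hUW j hj))

theorem qnStable_of_pairwise_linearIndependent (hsum : ∑ i, θ i = 2)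
    (hθ : ∀ i, 0 < θ i ∧ θ i < 1) (hne : ∀ i, s i ≠ 0)
    (hind : Pairwise fun i j => LinearIndependent k ![s i, s j]) : QnStable θ s := by
  refine QnStable.of_forall_lt hsum fun U W hUW h0 h2 => ?_
  by_cases hbot : W = ⊥
  · refine absurd ⟨eq_empty_of_forall_notMem fun i hi => hne i ?_, hbot⟩ h0
    simpa [hbot] using hUW i hi
  by_cases htop : W = ⊤
  · subst htop
    obtain ⟨i, -, hi⟩ := exists_of_ssubset (ssubset_univ_iff.mpr fun h => h2 ⟨h, rfl⟩)
    have := sum_lt_sum_of_subset (subset_univ U) (mem_univ i) hi (hθ i).1 fun j _ _ => (hθ j).1.le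
    simp only [finrank_top, Module.finrank_fin_fun]
    push_cast
    linarith
  have hrank : (1 : ℚ) ≤ Module.finrank k W := by
    exact_mod_cast Nat.one_le_iff_ne_zero.mpr (mt Submodule.finrank_eq_zero.mp hbot)
  have hsum_U : ∑ i ∈ U, θ i < 1 := by
    rcases U.eq_empty_or_nonempty with rfl | ⟨i, hi⟩
    · simp
    have hUi : U ⊆ {i} := fun j hj =>
      mem_singleton.mpr (Finset.card_le_one.mp (hUW.card_le_one hind htop) j hj i hi)
    calc ∑ j ∈ U, θ j ≤ ∑ j ∈ {i}, θ j :=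
          sum_le_sum_of_subset_of_nonneg hUi fun j _ _ => (hθ j).1.le
      _ < 1 := by simpa using (hθ i).2
  linarith

end

theorem exists_qn_stable_iff_general [Infinite k] {n : ℕ}
    (θ : Fin n → ℚ) (hsum : ∑ i, θ i = 2) :
    (∃ s : Fin n → Fin 2 → k, QnStable θ s) ↔ ∀ i, 0 < θ i ∧ θ i < 1 := by
  refine ⟨fun ⟨s, hs⟩ i => ⟨hs.pos hsum i, hs.lt_one i⟩, fun hθ => ?_⟩
  let x : Fin n ↪ k := Fin.valEmbedding.trans (Infinite.natEmbedding k)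
  refine ⟨fun i => ![1, x i], qnStable_of_pairwise_linearIndependent hsum hθ ?_ ?_⟩
  · exact fun i h => one_ne_zero (congrFun h 0)
  · exact fun i j hij => linearIndependent_one_pair_of_ne (x.injective.ne hij)

/-- Over an infinite field a `θ`-stable representation of `Q_n` exists if and only if
`0 < θ_i < 1` for all `i`. -/
theorem exists_qn_stable_iff [Infinite k] {n : ℕ} (hn : 1 ≤ n)
    (θ : Fin n → ℚ) (hsum : ∑ i, θ i = 2) :
    (∃ s : Fin n → Fin 2 → k, QnStable θ s) ↔ ∀ i, 0 < θ i ∧ θ i < 1 :=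
  exists_qn_stable_iff_general θ hsum

end
end

section
/- Let k be a field and s = (s_1,…,s_n) with s_i = (a_i,b_i) ∈ k × k and s_i ≠ (0,0) for all i; set J_0 = {i : a_i = 0} and J_∞ = {i : b_i = 0}. Then there exists w ∈ Δ^1×Δ^{n−1} such that s is w-stable if and only if J_0 ∪ J_∞ ≠ {1,…,n}. If J_0 ∪ J_∞ = {1,…,n}, then {w ∈ Δ^1×Δ^{n−1} : s is w-semistable} = {(η_1,η_2,θ) ∈ Δ^1×Δ^{n−1} : ∑_{i∈J_∞} θ_i = −η_1}. -/
noncomputable section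

open Finset
open scoped Classical

variable {k : Type*} [Field k]

/-- A triple `(U, W₁, W₂)` is a subrepresentation of the representation `s` of the quiver
`P_n` (with dimension vector `(1,…,1)`) if `(s i).1 ∈ W₁` and `(s i).2 ∈ W₂` for `i ∈ U`. -/
def PnIsSubrep {ι : Type*} (s : ι → k × k) (U : Finset ι)
    (W1 W2 : Submodule k k) : Prop :=
  ∀ i ∈ U, (s i).1 ∈ W1 ∧ (s i).2 ∈ W2

/-- `s` is `(η₁,η₂,θ)`-semistable:
`η₁·dim W₁ + η₂·dim W₂ + ∑_{i∈U} θ_i ≤ 0` for every subrepresentation. -/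
def PnSemistable {ι : Type*} [Fintype ι] (η1 η2 : ℚ) (θ : ι → ℚ) (s : ι → k × k) : Prop :=
  ∀ (U : Finset ι) (W1 W2 : Submodule k k), PnIsSubrep s U W1 W2 →
    η1 * (Module.finrank k W1 : ℚ) + η2 * (Module.finrank k W2 : ℚ) + ∑ i ∈ U, θ i ≤ 0

/-- `s` is `(η₁,η₂,θ)`-stable: semistable, and the weight is `< 0` for every
subrepresentation other than `(∅,0,0)` and `({1,…,n},k,k)`. -/
def PnStable {ι : Type*} [Fintype ι] (η1 η2 : ℚ) (θ : ι → ℚ) (s : ι → k × k) : Prop :=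
  PnSemistable η1 η2 θ s ∧
  ∀ (U : Finset ι) (W1 W2 : Submodule k k), PnIsSubrep s U W1 W2 →
    ¬(U = ∅ ∧ W1 = ⊥ ∧ W2 = ⊥) → ¬(U = Finset.univ ∧ W1 = ⊤ ∧ W2 = ⊤) →
    η1 * (Module.finrank k W1 : ℚ) + η2 * (Module.finrank k W2 : ℚ) + ∑ i ∈ U, θ i < 0

/-!
For `s_i ≠ 0` a subrepresentation `(U, W₁, W₂)` is either `(∅, 0, 0)`, or has `W₁ = 0`, `W₂ = k` and
`U ⊆ J₀`, or `W₁ = k`, `W₂ = 0` and `U ⊆ J_∞`, or has `W₁ = W₂ = k`. Since `θ ≥ 0`, the weights of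
the middle two kinds are maximised by `(J₀, 0, k)` and `(J_∞, k, 0)`, while those of the last kind
are bounded by the total weight `0`. So (semi)stability amounts to `η₁ + θ(J_∞)` and `η₂ + θ(J₀)`
being negative (non-positive). As `J₀` and `J_∞` are disjoint, these two numbers add up to
`θ(J₀ ∪ J_∞) - 1`: if `J₀ ∪ J_∞` is everything they cannot both be negative, and both are
non-positive exactly when `θ(J_∞) = -η₁`; otherwise any `θ > 0` together with a symmetric choice
of `η` makes both negative.
-/

section

variable {ι : Type*} [Fintype ι] {s : ι → k × k} {η1 η2 : ℚ} {θ : ι → ℚ}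

theorem disjoint_filter_fst_eq_zero_filter_snd_eq_zero (hs : ∀ i, s i ≠ 0) :
    Disjoint ({i | (s i).1 = 0} : Finset ι) ({i | (s i).2 = 0} : Finset ι) := by
  simp only [Finset.disjoint_left, mem_filter, mem_univ, true_and]
  exact fun i h1 h2 => hs i (Prod.ext h1 h2)

theorem sum_filter_fst_eq_zero_add_sum_filter_snd_eq_zero [DecidableEq ι] {M : Type*}
    [AddCommMonoid M] (hs : ∀ i, s i ≠ 0)
    (hJ : ({i | (s i).1 = 0} : Finset ι) ∪ ({i | (s i).2 = 0} : Finset ι) = univ) (f : ι → M) :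
    ∑ i ∈ {i | (s i).1 = 0}, f i + ∑ i ∈ {i | (s i).2 = 0}, f i = ∑ i, f i := by
  rw [← sum_union (disjoint_filter_fst_eq_zero_filter_snd_eq_zero hs), hJ]

theorem pnIsSubrep_filter_fst_eq_zero_bot_top (s : ι → k × k) :
    PnIsSubrep s {i | (s i).1 = 0} ⊥ ⊤ := fun _ hi =>
  ⟨(Submodule.mem_bot k).2 (mem_filter.1 hi).2, Submodule.mem_top⟩

theorem pnIsSubrep_filter_snd_eq_zero_top_bot (s : ι → k × k) :
    PnIsSubrep s {i | (s i).2 = 0} ⊤ ⊥ := fun _ hi =>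
  ⟨Submodule.mem_top, (Submodule.mem_bot k).2 (mem_filter.1 hi).2⟩

theorem PnIsSubrep.cases_of_ne_zero {U : Finset ι} {W1 W2 : Submodule k k}
    (hs : ∀ i, s i ≠ 0) (h : PnIsSubrep s U W1 W2) :
    (U = ∅ ∧ W1 = ⊥ ∧ W2 = ⊥) ∨ (U ⊆ ({i | (s i).1 = 0} : Finset ι) ∧ W1 = ⊥ ∧ W2 = ⊤) ∨
      (U ⊆ ({i | (s i).2 = 0} : Finset ι) ∧ W1 = ⊤ ∧ W2 = ⊥) ∨ (W1 = ⊤ ∧ W2 = ⊤) := by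
  simp only [Finset.subset_iff, mem_filter, mem_univ, true_and]
  rcases eq_bot_or_eq_top W1 with rfl | rfl <;> rcases eq_bot_or_eq_top W2 with rfl | rfl
  · refine Or.inl ⟨Finset.eq_empty_of_forall_notMem fun i hi => hs i ?_, rfl, rfl⟩
    exact Prod.ext ((Submodule.mem_bot k).1 (h i hi).1) ((Submodule.mem_bot k).1 (h i hi).2)
  · exact Or.inr <| Or.inl ⟨fun i hi => (Submodule.mem_bot k).1 (h i hi).1, rfl, rfl⟩
  · exact Or.inr <| Or.inr <| Or.inl ⟨fun i hi => (Submodule.mem_bot k).1 (h i hi).2, rfl, rfl⟩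
  · exact Or.inr <| Or.inr <| Or.inr ⟨rfl, rfl⟩

theorem pnSemistable_iff (hs : ∀ i, s i ≠ 0) (hθ : ∀ i, 0 ≤ θ i)
    (hη : η1 + η2 + ∑ i, θ i = 0) :
    PnSemistable η1 η2 θ s ↔
      η1 + ∑ i ∈ {i | (s i).2 = 0}, θ i ≤ 0 ∧ η2 + ∑ i ∈ {i | (s i).1 = 0}, θ i ≤ 0 := by
  refine ⟨fun h => ⟨?_, ?_⟩, fun ⟨h1, h2⟩ U W1 W2 hU => ?_⟩
  · simpa using h _ _ _ (pnIsSubrep_filter_snd_eq_zero_top_bot s)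
  · simpa using h _ _ _ (pnIsSubrep_filter_fst_eq_zero_bot_top s)
  have hmono {V : Finset ι} (hV : U ⊆ V) : ∑ i ∈ U, θ i ≤ ∑ i ∈ V, θ i :=
    sum_le_sum_of_subset_of_nonneg hV fun i _ _ => hθ i
  rcases hU.cases_of_ne_zero hs with ⟨rfl, rfl, rfl⟩ | ⟨hJ, rfl, rfl⟩ | ⟨hJ, rfl, rfl⟩ | ⟨rfl, rfl⟩
  · simp
  all_goals
    simp only [finrank_bot, finrank_top, Module.finrank_self, Nat.cast_zero, Nat.cast_one]
  · linarith [hmono hJ]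
  · linarith [hmono hJ]
  · linarith [hmono (subset_univ U)]

theorem PnStable.add_sum_lt_zero (h : PnStable η1 η2 θ s) :
    η1 + ∑ i ∈ {i | (s i).2 = 0}, θ i < 0 ∧ η2 + ∑ i ∈ {i | (s i).1 = 0}, θ i < 0 := by
  constructor
  · simpa using h.2 _ _ _ (pnIsSubrep_filter_snd_eq_zero_top_bot s)
      (fun h => top_ne_bot h.2.1) (fun h => bot_ne_top h.2.2)
  · simpa using h.2 _ _ _ (pnIsSubrep_filter_fst_eq_zero_bot_top s)
      (fun h => top_ne_bot h.2.2) (fun h => bot_ne_top h.2.1)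

theorem pnStable_of_add_sum_lt_zero (hs : ∀ i, s i ≠ 0) (hθ : ∀ i, 0 < θ i)
    (hη : η1 + η2 + ∑ i, θ i = 0) (h1 : η1 + ∑ i ∈ {i | (s i).2 = 0}, θ i < 0)
    (h2 : η2 + ∑ i ∈ {i | (s i).1 = 0}, θ i < 0) : PnStable η1 η2 θ s := by
  refine ⟨(pnSemistable_iff hs (fun i => (hθ i).le) hη).2 ⟨h1.le, h2.le⟩,
    fun U W1 W2 hU hbot htop => ?_⟩
  have hmono {V : Finset ι} (hV : U ⊆ V) : ∑ i ∈ U, θ i ≤ ∑ i ∈ V, θ i :=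
    sum_le_sum_of_subset_of_nonneg hV fun i _ _ => (hθ i).le
  rcases hU.cases_of_ne_zero hs with hU0 | ⟨hJ, rfl, rfl⟩ | ⟨hJ, rfl, rfl⟩ | ⟨rfl, rfl⟩
  · exact absurd hU0 hbot
  all_goals
    simp only [finrank_bot, finrank_top, Module.finrank_self, Nat.cast_zero, Nat.cast_one]
  · linarith [hmono hJ]
  · linarith [hmono hJ]
  · obtain ⟨j, hj⟩ : ∃ j, j ∉ U := by
      by_contra! hall
      exact htop ⟨eq_univ_iff_forall.2 hall, rfl, rfl⟩
    linarith [sum_lt_sum_of_subset (subset_univ U) (mem_univ j) hj (hθ j) fun i _ _ => (hθ i).le]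

theorem exists_pnStable_of_filter_union_ne_univ [DecidableEq ι] (hs : ∀ i, s i ≠ 0)
    (hJ : ({i | (s i).1 = 0} : Finset ι) ∪ ({i | (s i).2 = 0} : Finset ι) ≠ univ) :
    ∃ (η1 η2 : ℚ) (θ : ι → ℚ),
      (η1 ≤ 0 ∧ η2 ≤ 0 ∧ η1 + η2 = -1 ∧ (∀ i, 0 ≤ θ i) ∧ ∑ i, θ i = 1) ∧
        PnStable η1 η2 θ s := by
  obtain ⟨j, -, hj⟩ := exists_of_ssubset (ssubset_univ_iff.2 hJ)
  have hcard : (0 : ℚ) < Fintype.card ι := by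
    exact_mod_cast Fintype.card_pos_iff.2 ⟨j⟩
  set θ : ι → ℚ := fun _ => (Fintype.card ι : ℚ)⁻¹
  have hθ (i : ι) : 0 < θ i := inv_pos.2 hcard
  have hsum : ∑ i, θ i = 1 := by
    simp [θ, card_univ, mul_inv_cancel₀ hcard.ne']
  set a := ∑ i ∈ {i | (s i).1 = 0}, θ i
  set b := ∑ i ∈ {i | (s i).2 = 0}, θ i
  have ha : 0 ≤ a := sum_nonneg fun i _ => (hθ i).le
  have hb : 0 ≤ b := sum_nonneg fun i _ => (hθ i).le
  have hab : a + b < 1 := by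
    rw [← hsum, ← sum_union (disjoint_filter_fst_eq_zero_filter_snd_eq_zero hs)]
    exact sum_lt_sum_of_subset (subset_univ _) (mem_univ j) hj (hθ j) fun i _ _ => (hθ i).le
  -- split the missing weight `1 - a - b` evenly between the two inequalities
  refine ⟨-(1 - a + b) / 2, -(1 + a - b) / 2, θ, ⟨by linarith, by linarith, by ring,
    fun i => (hθ i).le, hsum⟩, pnStable_of_add_sum_lt_zero hs hθ ?_ ?_ ?_⟩ <;> linarith

end

/-- A representation `s` of `P_n` with all `s_i ≠ 0` is stable for some weight in
`Δ¹×Δ^{n−1}` iff `J₀ ∪ J_∞ ≠ {1,…,n}`; if `J₀ ∪ J_∞ = {1,…,n}`, the set of weights in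
`Δ¹×Δ^{n−1}` for which `s` is semistable is the wall `W_{J_∞}`. -/
theorem pn_stable_exists_iff {n : ℕ} (s : Fin n → k × k) (hs : ∀ i, s i ≠ 0) :
    ((∃ (η1 η2 : ℚ) (θ : Fin n → ℚ),
        (η1 ≤ 0 ∧ η2 ≤ 0 ∧ η1 + η2 = -1 ∧ (∀ i, 0 ≤ θ i) ∧ ∑ i, θ i = 1) ∧
        PnStable η1 η2 θ s) ↔
      Finset.univ.filter (fun i => (s i).1 = 0) ∪
        Finset.univ.filter (fun i => (s i).2 = 0) ≠ Finset.univ) ∧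
    (Finset.univ.filter (fun i => (s i).1 = 0) ∪
        Finset.univ.filter (fun i => (s i).2 = 0) = Finset.univ →
      {w : ℚ × ℚ × (Fin n → ℚ) | (w.1 ≤ 0 ∧ w.2.1 ≤ 0 ∧ w.1 + w.2.1 = -1 ∧
          (∀ i, 0 ≤ w.2.2 i) ∧ ∑ i, w.2.2 i = 1) ∧ PnSemistable w.1 w.2.1 w.2.2 s}
        = {w : ℚ × ℚ × (Fin n → ℚ) | (w.1 ≤ 0 ∧ w.2.1 ≤ 0 ∧ w.1 + w.2.1 = -1 ∧
            (∀ i, 0 ≤ w.2.2 i) ∧ ∑ i, w.2.2 i = 1) ∧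
            ∑ i ∈ Finset.univ.filter (fun i => (s i).2 = 0), w.2.2 i = -w.1}) := by
  refine ⟨⟨?_, exists_pnStable_of_filter_union_ne_univ hs⟩, fun hJ => ?_⟩
  · rintro ⟨η1, η2, θ, ⟨-, -, hη, -, hsum⟩, hst⟩ hJ
    obtain ⟨h1, h2⟩ := hst.add_sum_lt_zero
    have hsplit := sum_filter_fst_eq_zero_add_sum_filter_snd_eq_zero hs hJ θ
    linarith
  · ext ⟨η1, η2, θ⟩
    refine and_congr_right fun ⟨_, _, hη, hθ, hsum⟩ => ?_
    rw [pnSemistable_iff hs hθ (by linarith)]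
    have hsplit := sum_filter_fst_eq_zero_add_sum_filter_snd_eq_zero hs hJ θ
    exact ⟨fun ⟨h1, h2⟩ => by linarith, fun h => ⟨by linarith, by linarith⟩⟩
end
end
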